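/- arXiv:1203.5751 — 2 statements merged into one kernel-verified Lean document; each statement's English description precedes it below -/
import Mathlib

section
/- Let W_{λ,μ} denote the set of w in W with (P_i ∪ P_{i+1} ∪ ...)·w ⊆ Q_i ∪ Q_{i+1} ∪ ... for all i. Then: W_{λ,μ} ≠ ∅ iff μ ⊴ λ; W_{λ,λ} = W_λ; and W_{λ,μ}·W_{μ,ν} ⊆ W_{λ,ν} whenever ν ⊴ μ ⊴ λ. -/
open Equiv Finset

noncomputable section

/-- Coxeter length of a permutation of `Fin r` = number of inversions. -/
def permLength {r : ℕ} (w : Equiv.Perm (Fin r)) : ℕ :=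
  (Finset.univ.filter (fun p : Fin r × Fin r => p.1 < p.2 ∧ w p.2 < w p.1)).card

/-- the simple transpositions `(i, i+1)`. -/
def IsSimpleTransposition {r : ℕ} (s : Equiv.Perm (Fin r)) : Prop :=
  ∃ (i : ℕ) (h : i + 1 < r), s = Equiv.swap ⟨i, Nat.lt_of_succ_lt h⟩ ⟨i + 1, h⟩

/-- strong Bruhat order: `u ⊴ v` iff `u` is the product of a sublist of a reduced word for `v`. -/
def BruhatLE {r : ℕ} (u v : Equiv.Perm (Fin r)) : Prop :=
  ∃ L : List (Equiv.Perm (Fin r)),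
    (∀ s ∈ L, IsSimpleTransposition s) ∧ L.prod = v ∧ L.length = permLength v ∧
      ∃ L' : List (Equiv.Perm (Fin r)), L'.Sublist L ∧ L'.prod = u

def partialSum (f : ℕ → ℕ) (e : ℕ) : ℕ := ∑ j ∈ Finset.range e, f j

/-- a composition of `r`: a (finitely supported) sequence of non-negative integers summing to `r`. -/
def IsCompositionOf (f : ℕ → ℕ) (r : ℕ) : Prop :=
  (Function.support f).Finite ∧ ∑ᶠ i, f i = r

/-- dominance order on compositions: `DomLE f g` means `f ⊴ g`. -/
def DomLE (f g : ℕ → ℕ) : Prop := ∀ e : ℕ, partialSum f e ≤ partialSum g e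

/-- (0-indexed) row of the box `b` in the Young diagram of the composition `f`,
boxes being numbered `0, 1, 2, …` along the rows. -/
def rowIndex {r : ℕ} (f : ℕ → ℕ) (b : Fin r) : ℕ :=
  sInf {i : ℕ | (b : ℕ) < partialSum f (i + 1)}

/-- the Young (standard parabolic) subgroup `W_f`, as a set of permutations. -/
def YoungSubgroup {r : ℕ} (f : ℕ → ℕ) : Set (Equiv.Perm (Fin r)) :=
  {w | ∀ b : Fin r, rowIndex f (w b) = rowIndex f b}

/-- `W_{f,g}`; positions are acted on on the right, `(b)w = w⁻¹ b`. -/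
def Wlm {r : ℕ} (f g : ℕ → ℕ) : Set (Equiv.Perm (Fin r)) :=
  {w | ∀ (i : ℕ) (b : Fin r), i ≤ rowIndex f b → i ≤ rowIndex g (w⁻¹ b)}

/-- `D_f`: minimal length representatives of the cosets `W_f d`. -/
def minimalCosetReps {r : ℕ} (f : ℕ → ℕ) : Set (Equiv.Perm (Fin r)) :=
  {d | ∀ π ∈ YoungSubgroup (r := r) f, permLength d ≤ permLength (π * d)}

/-- a tableau of shape `f` is encoded by its entry function, a permutation of the boxes;
the tableau `t^f d` corresponds to the entry function `d⁻¹`. -/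
def IsRowStandard {r : ℕ} (f : ℕ → ℕ) (t : Equiv.Perm (Fin r)) : Prop :=
  ∀ b₁ b₂ : Fin r, rowIndex f b₁ = rowIndex f b₂ → b₁ < b₂ → t b₁ < t b₂

/-- generalized tableaux are functions `Fin r → ℕ`; content `g` (0-indexed entries). -/
def HasContent {r : ℕ} (g : ℕ → ℕ) (T : Fin r → ℕ) : Prop :=
  ∀ i : ℕ, (Finset.univ.filter (fun b => T b = i)).card = g i

def IsRowSemistandard {r : ℕ} (f : ℕ → ℕ) (T : Fin r → ℕ) : Prop :=
  ∀ b₁ b₂ : Fin r, rowIndex f b₁ = rowIndex f b₂ → b₁ ≤ b₂ → T b₁ ≤ T b₂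

/-- ascending: every entry in row `i` is `≥ i`. -/
def IsAscending {r : ℕ} (f : ℕ → ℕ) (T : Fin r → ℕ) : Prop :=
  ∀ b : Fin r, rowIndex f b ≤ T b

/-- `T^λ_g`: the boxes filled in the natural order with `g 0` zeroes, `g 1` ones, … -/
def stdTableau {r : ℕ} (g : ℕ → ℕ) : Fin r → ℕ := fun b => rowIndex g b

/-- conjugate (dual) of a partition. -/
def conjFn (l : ℕ → ℕ) : ℕ → ℕ := fun i => Nat.card {k : ℕ | i + 1 ≤ l k}

/-- (row, column) coordinates of box `b` in the diagram of `f`. -/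
def boxPlace {r : ℕ} (f : ℕ → ℕ) (b : Fin r) : ℕ × ℕ :=
  (rowIndex f b, (b : ℕ) - partialSum f (rowIndex f b))

section AuxStatement9

variable {r : ℕ} {f : ℕ → ℕ}

lemma aux_partialSum_mono (f : ℕ → ℕ) : Monotone (partialSum f) := fun _ _ h =>
  Finset.sum_le_sum_of_subset (Finset.range_subset_range.2 h)

lemma aux_partialSum_eventually (hf : IsCompositionOf f r) :
    ∃ N, ∀ n, N ≤ n → partialSum f n = r := by
  obtain ⟨N, hN⟩ := hf.1.toFinset.exists_nat_subset_range
  refine ⟨N, fun n hn => ?_⟩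
  have h1 : ∑ᶠ i, f i = ∑ i ∈ hf.1.toFinset, f i := finsum_eq_sum f hf.1
  have h2 : ∑ i ∈ hf.1.toFinset, f i = ∑ i ∈ Finset.range n, f i := by
    refine Finset.sum_subset (hN.trans (Finset.range_subset_range.2 hn)) (fun x _ hx => ?_)
    have := Set.Finite.mem_toFinset hf.1 (a := x)
    simp only [Function.mem_support] at this
    by_contra hc
    exact hx (this.2 hc)
  calc partialSum f n = ∑ i ∈ Finset.range n, f i := rfl
    _ = r := by rw [← h2, ← h1, hf.2]

lemma aux_partialSum_le (hf : IsCompositionOf f r) (e : ℕ) : partialSum f e ≤ r := by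
  obtain ⟨N, hN⟩ := aux_partialSum_eventually hf
  calc partialSum f e ≤ partialSum f (max e N) := aux_partialSum_mono f (le_max_left _ _)
    _ = r := hN _ (le_max_right _ _)

lemma aux_rowIndex_nonempty (hf : IsCompositionOf f r) (b : Fin r) :
    {i : ℕ | (b : ℕ) < partialSum f (i + 1)}.Nonempty := by
  obtain ⟨N, hN⟩ := aux_partialSum_eventually hf
  exact ⟨N, show (b : ℕ) < partialSum f (N + 1) by rw [hN (N + 1) (Nat.le_succ N)]; exact b.2⟩

lemma aux_lt_partialSum_rowIndex (hf : IsCompositionOf f r) (b : Fin r) :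
    (b : ℕ) < partialSum f (rowIndex f b + 1) :=
  Nat.sInf_mem (aux_rowIndex_nonempty hf b)

lemma aux_rowIndex_le_iff (hf : IsCompositionOf f r) (b : Fin r) (e : ℕ) :
    rowIndex f b ≤ e ↔ (b : ℕ) < partialSum f (e + 1) := by
  constructor
  · intro h
    exact (aux_lt_partialSum_rowIndex hf b).trans_le
      (aux_partialSum_mono f (Nat.add_le_add_right h 1))
  · intro h
    exact Nat.sInf_le h

lemma aux_le_rowIndex_iff (hf : IsCompositionOf f r) (b : Fin r) (e : ℕ) :
    e ≤ rowIndex f b ↔ partialSum f e ≤ (b : ℕ) := by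
  cases e with
  | zero => simp [partialSum]
  | succ e' =>
    rw [← not_lt, ← not_lt, not_iff_not, Nat.lt_succ_iff]
    exact aux_rowIndex_le_iff hf b e'

lemma aux_mem_Wlm_iff {f h : ℕ → ℕ} (w : Equiv.Perm (Fin r)) :
    w ∈ Wlm (r := r) f h ↔ ∀ b : Fin r, rowIndex f b ≤ rowIndex h (w⁻¹ b) :=
  ⟨fun hw b => hw _ b le_rfl, fun hw i b hi => hi.trans (hw b)⟩

lemma aux_card_filter_lt {p : ℕ} (hp : p ≤ r) :
    (Finset.univ.filter fun b : Fin r => (b : ℕ) < p).card = p := by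
  have : (Finset.univ.filter fun b : Fin r => (b : ℕ) < p)
      = (Finset.range p).attachFin (fun m hm => (Finset.mem_range.1 hm).trans_le hp) := by
    ext b
    simp [Finset.mem_attachFin]
  rw [this, Finset.card_attachFin, Finset.card_range]

lemma aux_card_filter_le {p : ℕ} (hp : p ≤ r) :
    (Finset.univ.filter fun b : Fin r => p ≤ (b : ℕ)).card = r - p := by
  have h1 : (Finset.univ.filter fun b : Fin r => p ≤ (b : ℕ))
      = Finset.univ \ (Finset.univ.filter fun b : Fin r => (b : ℕ) < p) := by
    rw [← Finset.filter_not]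
    simp [not_lt]
  rw [h1, Finset.card_sdiff_of_subset (Finset.filter_subset _ _), aux_card_filter_lt hp]
  simp

end AuxStatement9

theorem statement9 (r : ℕ) (l g : ℕ → ℕ) (hl : IsCompositionOf l r) (hg : IsCompositionOf g r) :
    ((Wlm (r := r) l g).Nonempty ↔ DomLE g l) ∧
    (Wlm (r := r) l l = YoungSubgroup (r := r) l) ∧
    (∀ nf : ℕ → ℕ, IsCompositionOf nf r → DomLE nf g → DomLE g l →
      ∀ v ∈ Wlm (r := r) l g, ∀ w ∈ Wlm (r := r) g nf, v * w ∈ Wlm (r := r) l nf) := by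
  refine ⟨⟨?_, ?_⟩, ?_, ?_⟩
  · -- nonempty → DomLE g l
    rintro ⟨w, hw⟩ e
    rw [aux_mem_Wlm_iff] at hw
    -- w⁻¹ maps {b : e ≤ rowIndex l b} injectively into {b : e ≤ rowIndex g b}
    have hcard : (Finset.univ.filter fun b : Fin r => e ≤ rowIndex l b).card ≤
        (Finset.univ.filter fun b : Fin r => e ≤ rowIndex g b).card := by
      apply Finset.card_le_card_of_injOn (fun b => w⁻¹ b)
      · intro b hb
        simp only [Finset.mem_coe, Finset.mem_filter, Finset.mem_univ, true_and] at hb ⊢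
        exact hb.trans (hw b)
      · intro a _ b _ hab
        exact w⁻¹.injective hab
    have h1 : (Finset.univ.filter fun b : Fin r => e ≤ rowIndex l b)
        = Finset.univ.filter fun b : Fin r => partialSum l e ≤ (b : ℕ) := by
      ext b; simp [aux_le_rowIndex_iff hl]
    have h2 : (Finset.univ.filter fun b : Fin r => e ≤ rowIndex g b)
        = Finset.univ.filter fun b : Fin r => partialSum g e ≤ (b : ℕ) := by
      ext b; simp [aux_le_rowIndex_iff hg]
    rw [h1, h2, aux_card_filter_le (aux_partialSum_le hl e),
      aux_card_filter_le (aux_partialSum_le hg e)] at hcard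
    have := aux_partialSum_le hl e
    have := aux_partialSum_le hg e
    omega
  · -- DomLE g l → nonempty (the identity works)
    intro hdom
    refine ⟨1, ?_⟩
    rw [aux_mem_Wlm_iff]
    intro b
    simp only [inv_one, Equiv.Perm.one_apply]
    have hb : (b : ℕ) < partialSum g (rowIndex g b + 1) := aux_lt_partialSum_rowIndex hg b
    have : (b : ℕ) < partialSum l (rowIndex g b + 1) := hb.trans_le (hdom _)
    exact (aux_rowIndex_le_iff hl b _).2 this
  · -- Wlm l l = YoungSubgroup l
    ext w
    constructor
    · intro hw
      rw [aux_mem_Wlm_iff] at hw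
      have hsum : ∑ b : Fin r, rowIndex l ((w⁻¹ : Equiv.Perm (Fin r)) b)
          = ∑ b : Fin r, rowIndex l b := Equiv.sum_comp (w⁻¹ : Equiv.Perm (Fin r)) (rowIndex l)
      have heq : ∀ b : Fin r, rowIndex l b = rowIndex l (w⁻¹ b) := by
        intro b
        have := (Finset.sum_eq_sum_iff_of_le (fun i _ => hw i)).1 hsum.symm b (Finset.mem_univ b)
        exact this
      intro b
      have := heq (w b)
      rwa [show w⁻¹ (w b) = b from w.symm_apply_apply b] at this
    · intro hw
      rw [aux_mem_Wlm_iff]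
      intro b
      have := hw (w⁻¹ b)
      rw [show w (w⁻¹ b) = b from w.apply_symm_apply b] at this
      rw [this]
  · -- composition
    intro nf _ _ _ v hv w hw
    rw [aux_mem_Wlm_iff] at hv hw ⊢
    intro b
    have h1 := hv b
    have h2 := hw (v⁻¹ b)
    refine h1.trans (h2.trans_eq ?_)
    simp [mul_inv_rev]
end
end

section
/- Let λ, μ be compositions of r and w ∈ W_{λ,μ}. If w = s·v with s a simple transposition, v ∈ W, and l(w) = l(v)+1, then there exists a composition ρ of r with μ ⊴ ρ ⊴ λ, s ∈ W_{λ,ρ}, and v ∈ W_{ρ,μ}. -/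
open Equiv Finset

noncomputable section

section AuxStatement10

open Finset

private lemma pS_mono' (f : ℕ → ℕ) {e e' : ℕ} (h : e ≤ e') : partialSum f e ≤ partialSum f e' :=
  Finset.sum_le_sum_of_subset (Finset.range_subset_range.2 h)

private lemma exists_stab' {f : ℕ → ℕ} {r : ℕ} (hf : IsCompositionOf f r) :
    ∃ N, ∀ e, N ≤ e → partialSum f e = r := by
  obtain ⟨N, hN⟩ := hf.1.toFinset.exists_nat_subset_range
  refine ⟨N, fun e he => ?_⟩
  have hsub : Function.support f ⊆ ↑(Finset.range e) := by
    intro i hi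
    have : i ∈ Finset.range N := hN (hf.1.mem_toFinset.2 hi)
    simp only [Finset.coe_range, Set.mem_Iio]; simp at this; omega
  exact (finsum_eq_finset_sum_of_support_subset f hsub).symm.trans hf.2

private lemma comp_of_stab' {f : ℕ → ℕ} {r : ℕ} (hfin : (Function.support f).Finite)
    {N : ℕ} (hN : ∀ e, N ≤ e → partialSum f e = r) : IsCompositionOf f r := by
  refine ⟨hfin, ?_⟩
  obtain ⟨M, hM⟩ := hfin.toFinset.exists_nat_subset_range
  have hsub : Function.support f ⊆ ↑(Finset.range (max M N)) := by
    intro i hi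
    have : i ∈ Finset.range M := hM (hfin.mem_toFinset.2 hi)
    simp only [Finset.coe_range, Set.mem_Iio]
    simp at this; omega
  rw [finsum_eq_finset_sum_of_support_subset f hsub]
  exact hN _ (le_max_right _ _)

private lemma pS_le_r' {f : ℕ → ℕ} {r : ℕ} (hf : IsCompositionOf f r) (e : ℕ) :
    partialSum f e ≤ r := by
  obtain ⟨N, hN⟩ := exists_stab' hf
  calc partialSum f e ≤ partialSum f (max e N) := pS_mono' f (le_max_left _ _)
    _ = r := hN _ (le_max_right _ _)

private lemma rowIndex_spec' {r : ℕ} {f : ℕ → ℕ} (hf : IsCompositionOf f r) (b : Fin r) :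
    partialSum f (rowIndex f b) ≤ (b : ℕ) ∧ (b : ℕ) < partialSum f (rowIndex f b + 1) := by
  obtain ⟨N, hN⟩ := exists_stab' hf
  have hne : (b : ℕ) < partialSum f (N + 1) := by
    rw [hN _ (Nat.le_succ _)]; exact b.2
  have hmem : rowIndex f b ∈ {i : ℕ | (b : ℕ) < partialSum f (i + 1)} :=
    Nat.sInf_mem ⟨N, hne⟩
  refine ⟨?_, hmem⟩
  rcases Nat.eq_zero_or_pos (rowIndex f b) with h0 | hpos
  · rw [h0]; exact Nat.zero_le _
  · have hlt : rowIndex f b - 1 < rowIndex f b := Nat.sub_lt hpos one_pos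
    have : rowIndex f b - 1 ∉ {i : ℕ | (b : ℕ) < partialSum f (i + 1)} :=
      Nat.notMem_of_lt_sInf hlt
    simp only [Set.mem_setOf_eq, not_lt] at this
    calc partialSum f (rowIndex f b) = partialSum f (rowIndex f b - 1 + 1) := by congr 1; omega
      _ ≤ (b : ℕ) := this

private lemma rowIndex_eq_of' {r : ℕ} {f : ℕ → ℕ} {b : Fin r} {k : ℕ}
    (h1 : partialSum f k ≤ (b : ℕ)) (h2 : (b : ℕ) < partialSum f (k + 1)) :
    rowIndex f b = k := by
  refine le_antisymm (Nat.sInf_le h2) ?_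
  by_contra h
  push_neg at h
  have hmem : rowIndex f b ∈ {i : ℕ | (b : ℕ) < partialSum f (i + 1)} :=
    Nat.sInf_mem ⟨k, h2⟩
  simp only [Set.mem_setOf_eq] at hmem
  have : partialSum f (rowIndex f b + 1) ≤ partialSum f k := pS_mono' f (by omega)
  omega

private lemma le_rowIndex_iff' {r : ℕ} {f : ℕ → ℕ} (hf : IsCompositionOf f r) {b : Fin r} {e : ℕ} :
    e ≤ rowIndex f b ↔ partialSum f e ≤ (b : ℕ) := by
  obtain ⟨h1, h2⟩ := rowIndex_spec' hf b
  constructor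
  · intro h; exact le_trans (pS_mono' f h) h1
  · intro h
    by_contra hc
    push_neg at hc
    have : partialSum f (rowIndex f b + 1) ≤ partialSum f e := pS_mono' f (by omega)
    omega

private lemma rowIndex_mono' {r : ℕ} {f : ℕ → ℕ} (hf : IsCompositionOf f r) {b₁ b₂ : Fin r}
    (h : b₁ ≤ b₂) : rowIndex f b₁ ≤ rowIndex f b₂ := by
  rw [le_rowIndex_iff' hf]
  exact le_trans (rowIndex_spec' hf b₁).1 h

private lemma myCardFilter' (r A : ℕ) :
    ((Finset.univ : Finset (Fin r)).filter (fun b : Fin r => A ≤ (b : ℕ))).card = r - A := by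
  rw [← Nat.card_Ico A r]
  apply Finset.card_bij (fun (b : Fin r) _ => (b : ℕ))
  · intro b hb; simp at hb; exact Finset.mem_Ico.mpr ⟨hb, b.2⟩
  · intro b1 h1 b2 h2 h; exact Fin.ext h
  · intro n hn; simp at hn; exact ⟨⟨n, hn.2⟩, by simp [hn.1], rfl⟩

private lemma counting' {r : ℕ} (u : Equiv.Perm (Fin r)) (A B : ℕ) (hB : B ≤ r)
    (h : ∀ b : Fin r, A ≤ (b : ℕ) → B ≤ ((u b) : ℕ)) : B ≤ A := by
  have hcard : ((Finset.univ.filter (fun b : Fin r => A ≤ (b : ℕ)))).card ≤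
      ((Finset.univ.filter (fun b : Fin r => B ≤ (b : ℕ)))).card := by
    apply Finset.card_le_card_of_injOn u
    · intro b hb; simp at hb ⊢; exact h b hb
    · exact u.injective.injOn
  rw [myCardFilter', myCardFilter'] at hcard
  omega

private lemma swap_lt_iff' {r a : ℕ} (ha : a + 1 < r) {x y : Fin r} (hyx : y < x) :
    Equiv.swap ⟨a, Nat.lt_of_succ_lt ha⟩ ⟨a+1, ha⟩ y < Equiv.swap ⟨a, Nat.lt_of_succ_lt ha⟩ ⟨a+1, ha⟩ x
      ↔ ¬(y = ⟨a, Nat.lt_of_succ_lt ha⟩ ∧ x = ⟨a+1, ha⟩) := by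
  simp only [Equiv.swap_apply_def, Fin.lt_def, Fin.ext_iff] at *
  split_ifs <;> simp_all <;> omega

private lemma descent' {r a : ℕ} (ha : a + 1 < r) (v : Equiv.Perm (Fin r))
    (hlen : permLength (Equiv.swap ⟨a, Nat.lt_of_succ_lt ha⟩ ⟨a+1, ha⟩ * v) = permLength v + 1) :
    v⁻¹ ⟨a, Nat.lt_of_succ_lt ha⟩ < v⁻¹ ⟨a+1, ha⟩ := by
  set fa : Fin r := ⟨a, Nat.lt_of_succ_lt ha⟩ with hfa
  set fa1 : Fin r := ⟨a+1, ha⟩ with hfa1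
  by_contra hc
  push_neg at hc
  have hne : fa ≠ fa1 := by simp [hfa, hfa1, Fin.ext_iff]
  have hlt : v⁻¹ fa1 < v⁻¹ fa := by
    refine lt_of_le_of_ne hc (fun hh => hne ?_)
    have := congrArg v hh
    simpa using this.symm
  set s : Equiv.Perm (Fin r) := Equiv.swap fa fa1 with hsdef
  set p₀ : Fin r × Fin r := (v⁻¹ fa1, v⁻¹ fa) with hp₀
  set Bset := Finset.univ.filter (fun p : Fin r × Fin r => p.1 < p.2 ∧ v p.2 < v p.1) with hB
  have hAB : Finset.univ.filter (fun p : Fin r × Fin r => p.1 < p.2 ∧ (s * v) p.2 < (s * v) p.1)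
      = Bset.erase p₀ := by
    ext p
    simp only [Finset.mem_filter, Finset.mem_erase, Finset.mem_univ, true_and, hB]
    constructor
    · rintro ⟨h12, hsv⟩
      rcases lt_or_gt_of_ne (fun hh : v p.1 = v p.2 => absurd (v.injective hh) (ne_of_lt h12)) with hv | hv
      · exfalso
        have := (swap_lt_iff' ha hv)
        by_cases hcase : v p.1 = fa ∧ v p.2 = fa1
        · have h1 : p.1 = v⁻¹ fa := by rw [← hcase.1]; simp
          have h2 : p.2 = v⁻¹ fa1 := by rw [← hcase.2]; simp
          rw [h1, h2] at h12; exact absurd h12 (not_lt.2 (le_of_lt hlt))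
        · have := this.2 hcase
          simp only [Equiv.Perm.mul_apply] at hsv
          exact absurd hsv (not_lt.2 (le_of_lt this))
      · refine ⟨?_, h12, hv⟩
        intro hpeq
        rw [hpeq] at hsv h12
        simp only [Equiv.Perm.mul_apply, hp₀, Equiv.Perm.coe_inv, Equiv.apply_symm_apply] at hsv
        rw [hsdef] at hsv
        rw [Equiv.swap_apply_left, Equiv.swap_apply_right] at hsv
        rw [hfa, hfa1, Fin.lt_def] at hsv
        simp at hsv
    · rintro ⟨hpne, h12, hv⟩
      refine ⟨h12, ?_⟩
      simp only [Equiv.Perm.mul_apply]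
      rw [hsdef]
      rw [swap_lt_iff' ha hv]
      rintro ⟨hy, hx⟩
      apply hpne
      have h1 : p.1 = v⁻¹ fa1 := by apply v.injective; simpa [hfa1] using hx
      have h2 : p.2 = v⁻¹ fa := by apply v.injective; simpa [hfa] using hy
      rw [hp₀, Prod.ext_iff]; exact ⟨h1, h2⟩
  have hp₀B : p₀ ∈ Bset := by
    simp only [hB, Finset.mem_filter, Finset.mem_univ, true_and, hp₀]
    refine ⟨hlt, ?_⟩
    simp only [Equiv.Perm.coe_inv, Equiv.apply_symm_apply]
    simp [hfa, hfa1, Fin.lt_def]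
  have h1 : permLength (s * v) = Bset.card - 1 := by
    rw [permLength, hAB, Finset.card_erase_of_mem hp₀B]
  have h2 : permLength v = Bset.card := rfl
  have h3 : 0 < Bset.card := Finset.card_pos.2 ⟨p₀, hp₀B⟩
  rw [h1, h2] at hlen
  omega

private lemma pS_rho' {l : ℕ → ℕ} {j j' : ℕ} (hjj : j < j') (hlj : 1 ≤ l j) (e : ℕ) :
    partialSum (fun i => if i = j then l j - 1 else if i = j' then l j' + 1 else l i) e
      + (if j < e then 1 else 0)
    = partialSum l e + (if j' < e then 1 else 0) := by
  induction e with
  | zero => simp [partialSum]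
  | succ e ih =>
    simp only [partialSum, Finset.sum_range_succ] at *
    rcases eq_or_ne e j with rfl | h1
    · rw [if_pos rfl]
      split_ifs at ih ⊢ <;> omega
    · rcases eq_or_ne e j' with rfl | h2
      · rw [if_neg h1, if_pos rfl]
        split_ifs at ih ⊢ <;> omega
      · rw [if_neg h1, if_neg h2]
        split_ifs at ih ⊢ <;> omega

private lemma dom_of_Wlm' {r : ℕ} {l g : ℕ → ℕ} (hl : IsCompositionOf l r)
    (hg : IsCompositionOf g r) (W : Equiv.Perm (Fin r))
    (hW : ∀ b : Fin r, rowIndex l b ≤ rowIndex g (W⁻¹ b)) : DomLE g l := by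
  intro e
  refine counting' W⁻¹ (partialSum l e) (partialSum g e) (pS_le_r' hg e) (fun b hb => ?_)
  exact (le_rowIndex_iff' hg).1 (le_trans ((le_rowIndex_iff' hl).2 hb) (hW b))

end AuxStatement10

theorem statement10 (r : ℕ) (l g : ℕ → ℕ) (hl : IsCompositionOf l r) (hg : IsCompositionOf g r)
    (w s v : Equiv.Perm (Fin r)) (hw : w ∈ Wlm (r := r) l g)
    (hs : IsSimpleTransposition s) (hfac : w = s * v)
    (hlen : permLength w = permLength v + 1) :
    ∃ ρ : ℕ → ℕ, IsCompositionOf ρ r ∧ DomLE g ρ ∧ DomLE ρ l ∧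
      s ∈ Wlm (r := r) l ρ ∧ v ∈ Wlm (r := r) ρ g := by
  obtain ⟨a, ha, hseq⟩ := hs
  subst hseq
  subst hfac
  set fa : Fin r := ⟨a, Nat.lt_of_succ_lt ha⟩ with hfa
  set fa1 : Fin r := ⟨a + 1, ha⟩ with hfa1
  have hfav : (fa : ℕ) = a := rfl
  have hfa1v : (fa1 : ℕ) = a + 1 := rfl
  have key : v⁻¹ fa < v⁻¹ fa1 := descent' ha v hlen
  set W : Equiv.Perm (Fin r) := Equiv.swap fa fa1 * v with hWdef
  have hWinv : ∀ b : Fin r, W⁻¹ b = v⁻¹ (Equiv.swap fa fa1 b) := by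
    intro b
    rw [hWdef, mul_inv_rev, Equiv.swap_inv, Equiv.Perm.mul_apply]
  have hvinv : ∀ b : Fin r, v⁻¹ b = W⁻¹ (Equiv.swap fa fa1 b) := by
    intro b
    rw [hWinv, Equiv.swap_apply_self]
  simp only [Wlm, Set.mem_setOf_eq] at hw
  have hw' : ∀ b : Fin r, rowIndex l b ≤ rowIndex g (W⁻¹ b) := fun b => hw _ b le_rfl
  have hkey : (W⁻¹ fa1 : Fin r) < W⁻¹ fa := by
    rw [hWinv, hWinv, Equiv.swap_apply_left, Equiv.swap_apply_right]; exact key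
  have hkg : rowIndex g (W⁻¹ fa1) ≤ rowIndex g (W⁻¹ fa) := rowIndex_mono' hg (le_of_lt hkey)
  have hfale : fa ≤ fa1 := by simp [hfa, hfa1, Fin.le_def]
  set j := rowIndex l fa with hj
  set j' := rowIndex l fa1 with hj'
  have hjle : j ≤ j' := rowIndex_mono' hl hfale
  rcases eq_or_lt_of_le hjle with hjj | hjj
  · -- case j = j' : take ρ = l
    have hsw : ∀ b : Fin r, rowIndex l (Equiv.swap fa fa1 b) = rowIndex l b := by
      intro b
      rcases eq_or_ne b fa with rfl | h1
      · rw [Equiv.swap_apply_left, ← hj', ← hj]; exact hjj.symm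
      · rcases eq_or_ne b fa1 with rfl | h2
        · rw [Equiv.swap_apply_right, ← hj, ← hj']; exact hjj
        · rw [Equiv.swap_apply_of_ne_of_ne h1 h2]
    refine ⟨l, hl, dom_of_Wlm' hl hg W hw', fun e => le_rfl, ?_, ?_⟩
    · simp only [Wlm, Set.mem_setOf_eq]
      intro i b hib
      rw [Equiv.swap_inv, hsw]
      exact hib
    · simp only [Wlm, Set.mem_setOf_eq]
      intro i b hib
      rw [hvinv]
      exact le_trans hib (le_trans (le_of_eq (hsw b).symm) (hw' (Equiv.swap fa fa1 b)))
  · -- case j < j'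
    have hrr : rowIndex l fa < rowIndex l fa1 := by rw [← hj, ← hj']; exact hjj
    have hsa1l : partialSum l j ≤ a := by
      have h := (rowIndex_spec' hl fa).1
      rw [← hj, hfav] at h; exact h
    have hsa2 : a < partialSum l (j + 1) := by
      have h := (rowIndex_spec' hl fa).2
      rw [← hj, hfav] at h; exact h
    have hsa11 : partialSum l j' ≤ a + 1 := by
      have h := (rowIndex_spec' hl fa1).1
      rw [← hj', hfa1v] at h; exact h
    have hsa12 : a + 1 < partialSum l (j' + 1) := by
      have h := (rowIndex_spec' hl fa1).2
      rw [← hj', hfa1v] at h; exact h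
    have hmono1 : partialSum l (j + 1) ≤ partialSum l j' := pS_mono' l hjj
    have hb1 : partialSum l (j + 1) = a + 1 := by omega
    have hb2 : partialSum l j' = a + 1 := by omega
    have hlj : 1 ≤ l j := by
      have hss : partialSum l (j + 1) = partialSum l j + l j := Finset.sum_range_succ l j
      omega
    set ρ : ℕ → ℕ := fun i => if i = j then l j - 1 else if i = j' then l j' + 1 else l i with hρ
    have hpS : ∀ e, partialSum ρ e + (if j < e then 1 else 0)
        = partialSum l e + (if j' < e then 1 else 0) := by
      intro e; rw [hρ]; exact pS_rho' hjj hlj e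
    have hpSall : ∀ e, partialSum ρ e = if j < e ∧ e ≤ j' then a else partialSum l e := by
      intro e
      have h1 := hpS e
      by_cases hc : j < e ∧ e ≤ j'
      · rw [if_pos hc]
        have l1 : partialSum l (j + 1) ≤ partialSum l e := pS_mono' l hc.1
        have l2 : partialSum l e ≤ partialSum l j' := pS_mono' l hc.2
        rw [if_pos hc.1, if_neg (by omega : ¬ j' < e)] at h1
        omega
      · rw [if_neg hc]
        push_neg at hc
        by_cases hje : j < e
        · have hj'e : j' < e := hc hje
          rw [if_pos hje, if_pos hj'e] at h1; omega
        · rw [if_neg hje, if_neg (by omega)] at h1; omega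
    have hfinρ : (Function.support ρ).Finite := by
      apply Set.Finite.subset (hl.1.union (Set.finite_singleton j'))
      intro i hi
      simp only [Function.mem_support] at hi
      simp only [hρ] at hi
      simp only [Set.mem_union, Set.mem_singleton_iff, Function.mem_support]
      rcases eq_or_ne i j with rfl | h1
      · left; simp only [if_pos rfl] at hi; omega
      · rcases eq_or_ne i j' with rfl | h2
        · right; rfl
        · left; rwa [if_neg h1, if_neg h2] at hi
    obtain ⟨N, hN⟩ := exists_stab' hl
    have hcomp : IsCompositionOf ρ r := by
      refine comp_of_stab' hfinρ (N := max N (j' + 1)) (fun e he => ?_)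
      rw [hpSall e, if_neg (by omega)]
      exact hN e (by omega)
    have hρrow : ∀ b : Fin r, rowIndex ρ b = if (b : ℕ) = a then j' else rowIndex l b := by
      intro b
      by_cases hba : (b : ℕ) = a
      · rw [if_pos hba]
        apply rowIndex_eq_of'
        · rw [hpSall, if_pos ⟨hjj, le_rfl⟩]; omega
        · rw [hpSall, if_neg (by omega)]
          omega
      · rw [if_neg hba]
        obtain ⟨hk1, hk2⟩ := rowIndex_spec' hl b
        apply rowIndex_eq_of'
        · rw [hpSall]
          split_ifs with hc
          · have h5 : partialSum l (j + 1) ≤ partialSum l (rowIndex l b) :=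
              pS_mono' l hc.1
            omega
          · exact hk1
        · rw [hpSall]
          split_ifs with hc
          · have h5 : partialSum l (rowIndex l b + 1) ≤ partialSum l j' :=
              pS_mono' l hc.2
            omega
          · exact hk2
    refine ⟨ρ, hcomp, ?_, ?_, ?_, ?_⟩
    · -- DomLE g ρ
      intro e
      rw [hpSall]
      split_ifs with hc
      · refine counting' W⁻¹ a (partialSum g e) (pS_le_r' hg e) (fun b hb => ?_)
        rw [← le_rowIndex_iff' hg]
        rcases eq_or_lt_of_le hb with hb' | hb'
        · have hbfa : b = fa := Fin.ext hb'.symm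
          rw [hbfa]
          calc e ≤ j' := hc.2
            _ ≤ rowIndex g (W⁻¹ fa1) := hw' fa1
            _ ≤ rowIndex g (W⁻¹ fa) := hkg
        · have hle : fa1 ≤ b := by
            rw [Fin.le_def]
            show a + 1 ≤ (b : ℕ)
            omega
          calc e ≤ j' := hc.2
            _ ≤ rowIndex l b := rowIndex_mono' hl hle
            _ ≤ rowIndex g (W⁻¹ b) := hw' b
      · exact dom_of_Wlm' hl hg W hw' e
    · -- DomLE ρ l
      intro e
      rw [hpSall]
      split_ifs with hc
      · have h5 : partialSum l (j + 1) ≤ partialSum l e := pS_mono' l hc.1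
        omega
      · exact le_rfl
    · -- swap ∈ Wlm l ρ
      simp only [Wlm, Set.mem_setOf_eq]
      intro i b hib
      rw [Equiv.swap_inv]
      rcases eq_or_ne b fa with rfl | h1
      · rw [Equiv.swap_apply_left, hρrow, if_neg (by simp [hfa1])]
        exact le_trans hib (le_of_lt hrr)
      · rcases eq_or_ne b fa1 with rfl | h2
        · rw [Equiv.swap_apply_right, hρrow, if_pos rfl]
          exact hib
        · rw [Equiv.swap_apply_of_ne_of_ne h1 h2, hρrow,
            if_neg (fun hh => h1 (Fin.ext hh))]
          exact hib
    · -- v ∈ Wlm ρ g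
      simp only [Wlm, Set.mem_setOf_eq]
      intro i b hib
      rw [hvinv]
      rw [hρrow] at hib
      rcases eq_or_ne b fa with rfl | h1
      · rw [Equiv.swap_apply_left]
        rw [if_pos rfl] at hib
        exact le_trans hib (hw' fa1)
      · rcases eq_or_ne b fa1 with rfl | h2
        · rw [Equiv.swap_apply_right]
          rw [if_neg (by simp [hfa1])] at hib
          exact le_trans hib (le_trans (hw' fa1) hkg)
        · rw [Equiv.swap_apply_of_ne_of_ne h1 h2]
          rw [if_neg (fun hh => h1 (Fin.ext hh))] at hib
          exact le_trans hib (hw' b)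
end
end
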